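/- arXiv:2102.01372 — 4 statements merged into one kernel-verified Lean document; each statement's English description precedes it below -/
import Mathlib

section
/- Let (X, A) be a cross resolvable design with v points, r parallel classes, b_r blocks per parallel class, for which all cross intersection numbers μ_2, ..., μ_z exist for some z ≤ r. Fix z distinct parallel classes and t distinct blocks from each (1 ≤ t ≤ b_r), giving tz blocks A_1, ..., A_{tz} each of size k. Then the cardinality of the union A_1 ∪ ... ∪ A_{tz} equals z·t·k + Σ_{s=2}^{z} (-1)^{s+1} t^s · C(z,s) · μ_s, where C(z,s) is the binomial coefficient. -/
/-!
Let `C s` be the union of the `t` chosen blocks of class `s`, so that `|C s| = t k`.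
Inclusion–exclusion over the `z` sets `C s` needs `|⋂_{s ∈ T} C s|` for nonempty `T`. Since blocks
of one class are pairwise disjoint, this intersection is the disjoint union, over the `t ^ |T|`
ways of picking one chosen block in each class of `T`, of the intersections of the picked blocks,
each of size `μ |T|` when `|T| ≥ 2`. The intersection sizes thus depend only on `|T|`, and the
alternating sum collapses to a sum over `|T|` weighted by binomial coefficients.
-/

open Finset Function

theorem card_biUnion_eq_sum_choose_of_card_inf' {ι α : Type*} [Fintype ι] [DecidableEq α]
    (S : ι → Finset α) (c : ℕ → ℕ)
    (hc : ∀ (T : Finset ι) (hT : T.Nonempty), #(T.inf' hT S) = c #T) :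
    (#(univ.biUnion S) : ℤ) =
      ∑ m ∈ Icc 1 (Fintype.card ι), (-1 : ℤ) ^ (m + 1) * (Fintype.card ι).choose m * c m := by
  set g : ℕ → ℤ := fun m => if m = 0 then 0 else (-1) ^ (m + 1) * c m
  calc (#(univ.biUnion S) : ℤ)
      = ∑ T ∈ (univ : Finset ι).powerset with T.Nonempty, (-1 : ℤ) ^ (#T + 1) * c #T := by
        simp only [inclusion_exclusion_card_biUnion, hc]
        exact sum_coe_sort _ fun T => (-1 : ℤ) ^ (#T + 1) * c #T
    _ = ∑ T ∈ (univ : Finset ι).powerset, g #T := by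
        rw [sum_filter]
        exact sum_congr rfl fun T _ => by simp only [g, ← card_ne_zero, ite_not]
    _ = _ := by
        rw [sum_powerset_apply_card, card_univ, range_eq_Ico,
          sum_eq_sum_Ico_succ_bot (by omega), zero_add, Ico_add_one_right_eq_Icc]
        simp only [g, if_pos, Nat.choose_zero_right, smul_zero, zero_add]
        refine sum_congr rfl fun m hm => ?_
        rw [if_neg (by grind), nsmul_eq_mul]
        ring

theorem card_inf'_biUnion_of_pairwise_disjoint {ι κ α : Type*} [Fintype κ] [DecidableEq α]
    (B : ι → κ → Finset α) (hB : ∀ i, Pairwise (Disjoint on B i))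
    {T : Finset ι} (hT : T.Nonempty) {m : ℕ}
    (hm : ∀ f : ι → κ, #(T.inf' hT fun i => B i (f i)) = m) :
    #(T.inf' hT fun i => univ.biUnion (B i)) = Fintype.card κ ^ #T * m := by
  classical
  obtain ⟨i₀, hi₀⟩ := id hT
  let extend (g : T → κ) (i : ι) : κ := if hi : i ∈ T then g ⟨i, hi⟩ else g ⟨i₀, hi₀⟩
  have extend_apply (g : T → κ) (i : T) : extend g i = g i := dif_pos i.2
  have hdecomp : (T.inf' hT fun i => univ.biUnion (B i)) =
      univ.biUnion fun g : T → κ => T.inf' hT fun i => B i (extend g i) := by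
    ext x
    simp only [mem_inf', mem_biUnion, mem_univ, true_and]
    constructor
    · intro hx
      choose g hg using fun i : T => hx i i.2
      exact ⟨g, fun i hi => extend_apply g ⟨i, hi⟩ ▸ hg ⟨i, hi⟩⟩
    · rintro ⟨g, hg⟩ i hi
      exact ⟨_, hg i hi⟩
  have hdisj : (↑(univ : Finset (T → κ)) : Set (T → κ)).PairwiseDisjoint
      fun g => T.inf' hT fun i => B i (extend g i) := by
    intro g _ g' _ hne
    obtain ⟨i, hi⟩ := Function.ne_iff.1 hne
    refine disjoint_left.2 fun x hx hx' => ?_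
    have h := (mem_inf' _).1 hx i i.2
    have h' := (mem_inf' _).1 hx' i i.2
    rw [extend_apply] at h h'
    exact disjoint_left.1 (hB i hi) h h'
  rw [hdecomp, card_biUnion hdisj, sum_const_nat fun g _ => hm (extend g), card_univ,
    Fintype.card_fun, Fintype.card_coe]

theorem stmt_6_general {α : Type*} [DecidableEq α] (z t k : ℕ)
    (μ : ℕ → ℕ)
    (B : Fin z → Fin t → Finset α)
    (hsize : ∀ s j, (B s j).card = k)
    (hdisj : ∀ s, ∀ j j' : Fin t, j ≠ j' → Disjoint (B s j) (B s j'))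
    (hcross : ∀ S : Finset (Fin z), 2 ≤ S.card → ∀ f : Fin z → Fin t,
      (⋂ s ∈ S, (B s (f s) : Set α)).ncard = μ S.card) :
    ((⋃ s, ⋃ j, (B s j : Set α)).ncard : ℤ) =
      z * t * k + ∑ s ∈ Finset.Icc 2 z,
        (-1 : ℤ) ^ (s + 1) * (t : ℤ) ^ s * (z.choose s) * (μ s) := by
  set C : Fin z → Finset α := fun s => univ.biUnion (B s)
  have hunion : (⋃ s, ⋃ j, (B s j : Set α)) = ↑(univ.biUnion C) := by ext; simp [C]
  have hclass (T : Finset (Fin z)) (hT : T.Nonempty) :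
      #(T.inf' hT C) = if #T = 1 then t * k else t ^ #T * μ #T := by
    split_ifs with hT₁
    · obtain ⟨s, rfl⟩ := card_eq_one.1 hT₁
      rw [inf'_singleton, card_biUnion fun j _ j' _ => hdisj s j j',
        sum_const_nat fun j _ => hsize s j, card_univ, Fintype.card_fin]
    · refine (card_inf'_biUnion_of_pairwise_disjoint B hdisj hT fun f => ?_).trans
        (by rw [Fintype.card_fin])
      have hcoe : ((T.inf' hT fun s => B s (f s) : Finset α) : Set α) =
          ⋂ s ∈ T, (B s (f s) : Set α) := by
        ext; simp
      rw [← Set.ncard_coe_finset, hcoe, hcross T (by have := hT.card_pos; omega) f]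
  rw [hunion, Set.ncard_coe_finset, card_biUnion_eq_sum_choose_of_card_inf' C
    (fun m => if m = 1 then t * k else t ^ m * μ m) hclass, Fintype.card_fin]
  rcases Nat.eq_zero_or_pos z with rfl | hz
  · simp
  rw [← insert_Icc_add_one_left_eq_Icc hz, sum_insert (by simp)]
  congr 1
  · simp only [Nat.reduceAdd, even_two, Even.neg_pow, one_pow, Nat.choose_one_right, one_mul,
      ↓reduceIte, Nat.cast_mul]
    ring
  · refine sum_congr rfl fun m hm => ?_
    rw [if_neg (by grind)]
    push_cast
    ring

/-- Inclusion–exclusion for the union of `t` blocks chosen from each of `z`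
distinct parallel classes of a cross resolvable design: if all blocks have size
`k`, blocks within the same class are pairwise disjoint, and any `s` chosen
blocks from `s` pairwise distinct classes (`2 ≤ s ≤ z`) intersect in exactly
`μ s` points, then
`|A₁ ∪ ⋯ ∪ A_{tz}| = z·t·k + Σ_{s=2}^{z} (-1)^{s+1} tˢ C(z,s) μ s`. -/
theorem stmt_6 {α : Type*} [DecidableEq α] (z t k : ℕ) (ht : 1 ≤ t)
    (μ : ℕ → ℕ)
    (B : Fin z → Fin t → Finset α)
    (hsize : ∀ s j, (B s j).card = k)
    (hdisj : ∀ s, ∀ j j' : Fin t, j ≠ j' → Disjoint (B s j) (B s j'))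
    (hcross : ∀ S : Finset (Fin z), 2 ≤ S.card → ∀ f : Fin z → Fin t,
      (⋂ s ∈ S, (B s (f s) : Set α)).ncard = μ S.card)
    (hμpos : ∀ s, 2 ≤ s → s ≤ z → 0 < μ s) :
    ((⋃ s, ⋃ j, (B s j : Set α)).ncard : ℤ) =
      z * t * k + ∑ s ∈ Finset.Icc 2 z,
        (-1 : ℤ) ^ (s + 1) * (t : ℤ) ^ s * (z.choose s) * (μ s) :=
  stmt_6_general z t k μ B hsize hdisj hcross
end

section
/- In the delivery algorithm of the proposed scheme, the total number of coded transmissions equals μ_z · C(b_r, t+1)^z · C(r, z), hence with subpacketization level v the achieved rate is R = μ_z · C(b_r, t+1)^z · C(r, z) / v. -/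
theorem card_aux (r br z t : ℕ) :
    Fintype.card {q : Finset (Fin r) × (Fin r → Finset (Fin br)) //
        q.1.card = z ∧ (∀ i ∈ q.1, (q.2 i).card = t + 1) ∧
        (∀ i ∉ q.1, q.2 i = ∅)} = (br.choose (t + 1)) ^ z * r.choose z := by
  classical
  let e : {q : Finset (Fin r) × (Fin r → Finset (Fin br)) //
        q.1.card = z ∧ (∀ i ∈ q.1, (q.2 i).card = t + 1) ∧
        (∀ i ∉ q.1, q.2 i = ∅)} ≃
      Σ S : {S : Finset (Fin r) // S.card = z},
        ({x // x ∈ S.1} → {T : Finset (Fin br) // T.card = t + 1}) :=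
  { toFun := fun ⟨⟨S, f⟩, hz, h1, _⟩ => ⟨⟨S, hz⟩, fun i => ⟨f i, h1 i i.2⟩⟩
    invFun := fun ⟨⟨S, hz⟩, g⟩ =>
      ⟨⟨S, fun i => if h : i ∈ S then (g ⟨i, h⟩).1 else ∅⟩, hz,
        fun i hi => by simp [hi, (g ⟨i, hi⟩).2],
        fun i hi => by simp [hi]⟩
    left_inv := fun ⟨⟨S, f⟩, hz, h1, h2⟩ => by
      ext i : 3
      · simp
      · by_cases h : i ∈ S <;> simp [h, h2 i]
        · exact (h2 i h).symm
    right_inv := fun ⟨⟨S, hz⟩, g⟩ =>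
      Sigma.ext rfl (heq_of_eq (funext fun ⟨i, hi⟩ => Subtype.ext (dif_pos hi))) }
  rw [Fintype.card_congr e, Fintype.card_sigma]
  have hcard : ∀ S : {S : Finset (Fin r) // S.card = z},
      Fintype.card ({x // x ∈ S.1} → {T : Finset (Fin br) // T.card = t + 1})
        = (br.choose (t + 1)) ^ z := by
    intro S
    rw [Fintype.card_fun]
    congr 1
    · rw [Fintype.card_finset_len, Fintype.card_fin]
    · rw [Fintype.card_coe, S.2]
  simp only [hcard, Finset.sum_const, smul_eq_mul, Finset.card_univ,
    Fintype.card_finset_len, Fintype.card_fin, mul_comm]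

/-- In the delivery algorithm of the proposed scheme, the total number of coded
transmissions (one transmission for each of the `μ` subfile indices, for each
choice of `z` of the `r` parallel classes and each choice of `t+1` of the `br`
blocks from each chosen class) equals `μ · C(br, t+1)^z · C(r, z)`; hence with
subpacketization level `v` the achieved rate is
`R = μ · C(br, t+1)^z · C(r, z) / v`. -/
theorem stmt_9 (r br z t μ v : ℕ) (hv : 0 < v) (R : ℚ)
    (hR : R = (Fintype.card {p : (Finset (Fin r) × (Fin r → Finset (Fin br))) × Fin μ //
        p.1.1.card = z ∧ (∀ i ∈ p.1.1, (p.1.2 i).card = t + 1) ∧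
        (∀ i ∉ p.1.1, p.1.2 i = ∅)} : ℚ) / v) :
    Fintype.card {p : (Finset (Fin r) × (Fin r → Finset (Fin br))) × Fin μ //
        p.1.1.card = z ∧ (∀ i ∈ p.1.1, (p.1.2 i).card = t + 1) ∧
        (∀ i ∉ p.1.1, p.1.2 i = ∅)} = μ * (br.choose (t + 1)) ^ z * r.choose z ∧
      R = ((μ * (br.choose (t + 1)) ^ z * r.choose z : ℕ) : ℚ) / v := by
  classical
  have e : {p : (Finset (Fin r) × (Fin r → Finset (Fin br))) × Fin μ //
        p.1.1.card = z ∧ (∀ i ∈ p.1.1, (p.1.2 i).card = t + 1) ∧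
        (∀ i ∉ p.1.1, p.1.2 i = ∅)} ≃
      {q : Finset (Fin r) × (Fin r → Finset (Fin br)) //
        q.1.card = z ∧ (∀ i ∈ q.1, (q.2 i).card = t + 1) ∧
        (∀ i ∉ q.1, q.2 i = ∅)} × Fin μ :=
  { toFun := fun ⟨⟨q, m⟩, h⟩ => (⟨q, h⟩, m)
    invFun := fun ⟨⟨q, h⟩, m⟩ => ⟨⟨q, m⟩, h⟩
    left_inv := fun ⟨⟨q, m⟩, h⟩ => rfl
    right_inv := fun ⟨⟨q, h⟩, m⟩ => rfl }
  have hc : Fintype.card {p : (Finset (Fin r) × (Fin r → Finset (Fin br))) × Fin μ //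
        p.1.1.card = z ∧ (∀ i ∈ p.1.1, (p.1.2 i).card = t + 1) ∧
        (∀ i ∉ p.1.1, p.1.2 i = ∅)} = μ * (br.choose (t + 1)) ^ z * r.choose z := by
    rw [Fintype.card_congr e, Fintype.card_prod, card_aux, Fintype.card_fin]
    ring
  refine ⟨hc, ?_⟩
  rw [hR, hc]
end

section
/- Let P1, ..., Pz be parallel classes of a resolvable design on point set X, and for each s fix t+1 blocks C_{s,i_{s_0}}, ..., C_{s,i_{s_t}} of class P_s. For a user determined by choosing t of these t+1 blocks from each class (say omitting block with index e_s in class s), define f = C_{1,e_1} ∩ C_{2,e_2} ∩ ... ∩ C_{z,e_z}. Then f equals the intersection, over all other users m' in this group (i.e., all other ways of choosing t blocks per class from the fixed t+1), of the union Y_{m'} of the blocks accessible to user m'. In particular f is contained in every other user's accessible set and disjoint from the given user's accessible set. -/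
/-- A user of the delivery group: a choice, for each of the `z` parallel
classes, of `t` of the `t+1` fixed blocks of that class. -/
def CCUser (z t : ℕ) := {a : Fin z → Finset (Fin (t + 1)) // ∀ s, (a s).card = t}

instance (z t : ℕ) : Fintype (CCUser z t) :=
  Subtype.fintype _

/-- The set of points accessible to a user: the union of its chosen blocks. -/
def CCAccess {α : Type*} {z t : ℕ} (B : Fin z → Fin (t + 1) → Finset α)
    (a : CCUser z t) : Set α :=
  ⋃ s, ⋃ j ∈ a.1 s, (B s j : Set α)

/-- Fix `t+1` blocks `B s 0, …, B s t` from each of `z` parallel classes of a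
resolvable design (so blocks within one class are pairwise disjoint).  For the
user `m` determined by omitting the block `B s (e s)` in each class `s`, the set
`f = ⋂ s, B s (e s)` equals the intersection, over all other users `m'` of this
group, of the accessible sets `Y m'`; in particular `f` is contained in every
other user's accessible set and is disjoint from user `m`'s accessible set. -/
theorem stmt_15 {α : Type*} [DecidableEq α] (z t : ℕ) (ht : 1 ≤ t)
    (B : Fin z → Fin (t + 1) → Finset α)
    (hdisj : ∀ s, ∀ j j' : Fin (t + 1), j ≠ j' → Disjoint (B s j) (B s j'))
    (e : Fin z → Fin (t + 1))
    (m : CCUser z t) (hm : ∀ s, m.1 s = {e s}ᶜ) :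
    (⋂ s, (B s (e s) : Set α)) =
        (⋂ (m' : CCUser z t) (_ : m' ≠ m), CCAccess B m') ∧
      Disjoint (⋂ s, (B s (e s) : Set α)) (CCAccess B m) ∧
      (∀ m' : CCUser z t, m' ≠ m →
        (⋂ s, (B s (e s) : Set α)) ⊆ CCAccess B m') := by
  classical
  have key3 : ∀ m' : CCUser z t, m' ≠ m → (⋂ s, (B s (e s) : Set α)) ⊆ CCAccess B m' := by
    intro m' hne x hx
    have hxs : ∀ s, x ∈ B s (e s) := by simpa [Set.mem_iInter] using hx
    have hex : ∃ s, m'.1 s ≠ m.1 s := by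
      by_contra h
      push_neg at h
      exact hne (Subtype.ext (funext h))
    obtain ⟨s, hs⟩ := hex
    have he : e s ∈ m'.1 s := by
      by_contra he
      have hsub : m'.1 s ⊆ ({e s}ᶜ : Finset (Fin (t+1))) := by
        intro j hj
        simp only [Finset.mem_compl, Finset.mem_singleton]
        rintro rfl; exact he hj
      have heq := Finset.eq_of_subset_of_card_le hsub
        (by simp [Finset.card_compl, m'.2 s])
      exact hs (by rw [heq, hm s])
    exact Set.mem_iUnion.2 ⟨s, Set.mem_iUnion₂.2 ⟨e s, he, hxs s⟩⟩
  have key2 : Disjoint (⋂ s, (B s (e s) : Set α)) (CCAccess B m) := by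
    rw [Set.disjoint_left]
    intro x hx hx'
    have hxs : ∀ s, x ∈ B s (e s) := by simpa [Set.mem_iInter] using hx
    simp only [CCAccess, Set.mem_iUnion] at hx'
    obtain ⟨s, j, hj, hxj⟩ := hx'
    rw [hm s] at hj
    have hne : j ≠ e s := by simpa using hj
    exact Finset.disjoint_left.mp (hdisj s j (e s) hne) hxj (hxs s)
  have key1 : (⋂ (m' : CCUser z t) (_ : m' ≠ m), CCAccess B m') ⊆ ⋂ s, (B s (e s) : Set α) := by
    intro x hx
    rw [Set.mem_iInter]
    intro s
    by_contra hxe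
    have hxe' : x ∉ B s (e s) := by simpa using hxe
    obtain ⟨j0, hj0⟩ : ∃ j : Fin (t+1), j ≠ e s :=
      Fintype.exists_ne_of_one_lt_card (by simp; omega) (e s)
    set c : Fin z → Fin (t+1) := fun s' =>
      if h : ∃ j, x ∈ B s' j then h.choose else if s' = s then j0 else e s' with hc
    have hcmem : ∀ s' j, x ∈ B s' j → c s' = j := by
      intro s' j hj
      have h : ∃ j, x ∈ B s' j := ⟨j, hj⟩
      have hch : x ∈ B s' h.choose := h.choose_spec
      have hcc : c s' = h.choose := by simp [hc, dif_pos h]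
      rw [hcc]
      by_contra hne
      exact Finset.disjoint_left.mp (hdisj s' _ _ hne) hch hj
    have hcs : c s ≠ e s := by
      by_cases h : ∃ j, x ∈ B s j
      · obtain ⟨j, hj⟩ := h
        rw [hcmem s j hj]
        rintro rfl; exact hxe' hj
      · simpa [hc, dif_neg h] using hj0
    have hcardc : ∀ s' : Fin z, (({c s'}ᶜ : Finset (Fin (t+1)))).card = t := by
      intro s'; simp [Finset.card_compl]
    let m' : CCUser z t := ⟨fun s' => {c s'}ᶜ, hcardc⟩
    have hm'ne : m' ≠ m := by
      intro h
      have h2 : ({c s}ᶜ : Finset (Fin (t+1))) = {e s}ᶜ := by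
        have := congrFun (congrArg Subtype.val h) s
        rw [hm s] at this
        exact this
      have h3 : ({c s} : Finset (Fin (t+1))) = {e s} := compl_injective h2
      exact hcs (Finset.singleton_injective h3)
    have hxm' : x ∈ CCAccess B m' := Set.mem_iInter₂.1 hx m' hm'ne
    simp only [CCAccess, Set.mem_iUnion] at hxm'
    obtain ⟨s', j, hj, hxj⟩ := hxm'
    have : j ≠ c s' := by simpa [m'] using hj
    exact this (hcmem s' j hxj).symm
  refine ⟨Set.Subset.antisymm (fun x hx => Set.mem_iInter₂.2 fun m' h => key3 m' h hx) key1,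
    key2, key3⟩
end

section
/- In the scheme with parameters r, b_r, z, t, the fraction of a file accessible to each user satisfies M'/N = (zt)·(M/N) + Σ_{s=2}^{z} (−1)^{s+1} t^s C(z,s) (μ_s / v), where M/N = k/v; in the special case z = 2 with the affine CRD parameters (k = q^{m−1}, v = q^m, μ2 = q^{m−2}) this gives M'/N = (2qt − t^2)/q^2. -/
/-- Auxiliary: cardinality of the intersection of class-unions. -/
theorem stmt19_key {α : Type*} [DecidableEq α] (z t k : ℕ) (ht : 1 ≤ t) (μ : ℕ → ℕ)
    (B : Fin z → Fin t → Finset α)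
    (hsize : ∀ s j, (B s j).card = k)
    (hdisj : ∀ s, ∀ j j' : Fin t, j ≠ j' → Disjoint (B s j) (B s j'))
    (hcross : ∀ S : Finset (Fin z), 2 ≤ S.card → ∀ f : Fin z → Fin t,
      (⋂ s ∈ S, (B s (f s) : Set α)).ncard = μ S.card)
    (T : Finset (Fin z)) (hT : T.Nonempty) :
    (T.inf' hT (fun s => Finset.univ.biUnion (B s))).card
      = t ^ T.card * (if T.card < 2 then k else μ T.card) := by
  classical
  set d : Fin t := ⟨0, ht⟩
  set P : Finset (Fin z → Fin t) :=
    Fintype.piFinset (fun s => if s ∈ T then (Finset.univ : Finset (Fin t)) else {d}) with hP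
  -- cardinality of each piece
  have hpiece : ∀ f : Fin z → Fin t,
      (T.inf' hT (fun s => B s (f s))).card = (if T.card < 2 then k else μ T.card) := by
    intro f
    split_ifs with hc
    · -- card T = 1
      have h1 : T.card = 1 := by
        have := Finset.card_pos.2 hT; omega
      obtain ⟨i, rfl⟩ := Finset.card_eq_one.1 h1
      simp [hsize]
    · have h2 : 2 ≤ T.card := by omega
      have hco : ((T.inf' hT (fun s => B s (f s)) : Finset α) : Set α)
          = ⋂ s ∈ T, (B s (f s) : Set α) := by
        ext x; simp [Finset.mem_inf']
      have := hcross T h2 f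
      rw [← hco, Set.ncard_coe_finset] at this
      exact this
  -- the covering
  have hcover : T.inf' hT (fun s => Finset.univ.biUnion (B s))
      = P.biUnion (fun f => T.inf' hT (fun s => B s (f s))) := by
    ext x
    simp only [Finset.mem_inf', Finset.mem_biUnion, Finset.mem_univ, true_and, hP,
      Fintype.mem_piFinset]
    constructor
    · intro h
      choose g hg using fun s (hs : s ∈ T) => h s hs
      refine ⟨fun s => if hs : s ∈ T then g s hs else d, fun s => ?_, fun s hs => ?_⟩
      · split_ifs with hs <;> simp [hs]
      · simp only []; rw [dif_pos hs]; exact hg s hs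
    · rintro ⟨f, _, hf⟩ s hs
      exact ⟨f s, hf s hs⟩
  have hdisjP : ∀ f ∈ P, ∀ g ∈ P, f ≠ g →
      Disjoint (T.inf' hT (fun s => B s (f s))) (T.inf' hT (fun s => B s (g s))) := by
    intro f hf g hg hfg
    obtain ⟨s, hs⟩ : ∃ s, f s ≠ g s := by
      by_contra h; push_neg at h; exact hfg (funext h)
    have hsT : s ∈ T := by
      by_contra hsT
      have hf' := Fintype.mem_piFinset.1 hf s
      have hg' := Fintype.mem_piFinset.1 hg s
      rw [if_neg hsT] at hf' hg'
      simp only [Finset.mem_singleton] at hf' hg'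
      exact hs (hf'.trans hg'.symm)
    exact Disjoint.mono (Finset.inf'_le _ hsT) (Finset.inf'_le _ hsT) (hdisj s _ _ hs)
  have hPcard : P.card = t ^ T.card := by
    rw [hP, Fintype.card_piFinset]
    have : ∀ s : Fin z, ((if s ∈ T then (Finset.univ : Finset (Fin t)) else {d}).card)
        = if s ∈ T then t else 1 := by
      intro s; split_ifs <;> simp
    rw [Finset.prod_congr rfl (fun s _ => this s)]
    rw [Finset.prod_ite_mem, Finset.univ_inter, Finset.prod_const]
  rw [hcover, Finset.card_biUnion hdisjP]
  rw [Finset.sum_congr rfl (fun f _ => hpiece f), Finset.sum_const, hPcard, smul_eq_mul]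

/-- The fraction of a file accessible to each user of the scheme: with `t`
blocks chosen from each of `z` parallel classes of a CRD (blocks of size `k`,
`v` points, blocks within a class pairwise disjoint, and any `s` blocks from
`s` distinct classes meeting in `μ s` points), the accessible fraction is
`M'/N = z·t·(M/N) + Σ_{s=2}^{z} (−1)^{s+1} tˢ C(z,s) (μ s / v)` where
`M/N = k/v`.  Moreover, in the special case `z = 2` with the affine CRD
parameters `k = q^(m−1)`, `v = q^m`, `μ₂ = q^(m−2)`, this simplifies to
`M'/N = (2qt − t²)/q²`. -/
theorem stmt_19 {α : Type*} [DecidableEq α] (z t k v : ℕ) (ht : 1 ≤ t)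
    (hv : 0 < v) (μ : ℕ → ℕ)
    (B : Fin z → Fin t → Finset α)
    (hsize : ∀ s j, (B s j).card = k)
    (hdisj : ∀ s, ∀ j j' : Fin t, j ≠ j' → Disjoint (B s j) (B s j'))
    (hcross : ∀ S : Finset (Fin z), 2 ≤ S.card → ∀ f : Fin z → Fin t,
      (⋂ s ∈ S, (B s (f s) : Set α)).ncard = μ S.card)
    (hμpos : ∀ s, 2 ≤ s → s ≤ z → 0 < μ s) :
    (((⋃ s, ⋃ j, (B s j : Set α)).ncard : ℚ) / v =
        z * t * ((k : ℚ) / v) + ∑ s ∈ Finset.Icc 2 z,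
          (-1 : ℚ) ^ (s + 1) * (t : ℚ) ^ s * (z.choose s) * ((μ s : ℚ) / v)) ∧
      (∀ q m : ℕ, 2 ≤ q → 2 ≤ m →
        2 * t * ((1 : ℚ) / q) - t ^ 2 * ((q : ℚ) ^ (m - 2) / (q : ℚ) ^ m) =
          (2 * q * t - t ^ 2 : ℚ) / q ^ 2) := by
  classical
  constructor
  · -- main inclusion-exclusion identity
    set A : Fin z → Finset α := fun s => Finset.univ.biUnion (B s) with hA
    have hUnion : (⋃ s, ⋃ j, (B s j : Set α))
        = ((Finset.univ : Finset (Fin z)).biUnion A : Finset α) := by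
      ext x
      simp [hA, Set.mem_iUnion]
    rw [hUnion, Set.ncard_coe_finset]
    set w : ℕ → ℕ := fun c => if c < 2 then k else μ c with hw
    set g : ℕ → ℤ := fun c => if c = 0 then 0 else (-1 : ℤ) ^ (c + 1) * (t ^ c * w c) with hg
    have hIE := Finset.inclusion_exclusion_card_biUnion (Finset.univ : Finset (Fin z)) A
    have h2 : ((Finset.univ.biUnion A).card : ℤ)
        = ∑ T ∈ (Finset.univ : Finset (Fin z)).powerset, g T.card := by
      rw [hIE, Finset.univ_eq_attach]
      have step1 : ∀ T ∈ (Finset.filter (fun x => Finset.Nonempty x)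
            (Finset.univ : Finset (Fin z)).powerset).attach,
          ((-1 : ℤ) ^ ((T : Finset (Fin z)).card + 1)
              * (((T : Finset (Fin z)).inf' (Finset.mem_filter.1 T.2).2 A).card : ℤ))
          = ((fun S : Finset (Fin z) =>
              (-1 : ℤ) ^ (S.card + 1) * ((t ^ S.card * w S.card : ℕ) : ℤ))
              (T : Finset (Fin z))) := by
        intro T _
        rw [stmt19_key z t k ht μ B hsize hdisj hcross _ (Finset.mem_filter.1 T.2).2]
      rw [Finset.sum_congr rfl step1, Finset.sum_attach
        (Finset.filter (fun x => Finset.Nonempty x) (Finset.univ : Finset (Fin z)).powerset)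
        (fun S : Finset (Fin z) =>
          (-1 : ℤ) ^ (S.card + 1) * ((t ^ S.card * w S.card : ℕ) : ℤ)),
        Finset.sum_filter]
      refine Finset.sum_congr rfl fun S _ => ?_
      split_ifs with h
      · have h0 : S.card ≠ 0 := by
          simpa [Finset.card_eq_zero, ← Finset.nonempty_iff_ne_empty] using h
        rw [hg]; simp only [if_neg h0]
        push_cast; ring
      · have h0 : S.card = 0 := by
          rw [Finset.not_nonempty_iff_eq_empty] at h; simp [h]
        rw [hg]; simp [h0]
    have h3 : ((Finset.univ.biUnion A).card : ℤ)
        = z * t * k + ∑ m ∈ Finset.Icc 2 z,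
            (-1 : ℤ) ^ (m + 1) * t ^ m * (z.choose m) * μ m := by
      rw [h2, Finset.sum_powerset_apply_card g]
      have hcardu : (Finset.univ : Finset (Fin z)).card = z := by simp
      rw [hcardu]
      have hg0 : g 0 = 0 := by simp [hg]
      have hg1 : g 1 = (t : ℤ) * k := by simp [hg, hw]
      rcases Nat.eq_zero_or_pos z with hz | hz
      · subst hz; simp [hg0]
      · have hsplit : Finset.range (z + 1) = insert 0 (insert 1 (Finset.Icc 2 z)) := by
          ext m
          simp only [Finset.mem_range, Finset.mem_insert, Finset.mem_Icc]
          omega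
        have h01 : (0 : ℕ) ∉ insert 1 (Finset.Icc 2 z) := by
          simp only [Finset.mem_insert, Finset.mem_Icc]; omega
        have h1I : (1 : ℕ) ∉ Finset.Icc 2 z := by
          simp only [Finset.mem_Icc]; omega
        rw [hsplit, Finset.sum_insert h01, Finset.sum_insert h1I, hg0, hg1, smul_zero,
          Nat.choose_one_right]
        have hrest : ∀ m ∈ Finset.Icc 2 z, z.choose m • g m
            = (-1 : ℤ) ^ (m + 1) * t ^ m * (z.choose m) * μ m := by
          intro m hm
          obtain ⟨hm2, hmz⟩ := Finset.mem_Icc.1 hm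
          have hm0 : m ≠ 0 := by omega
          have hwm : w m = μ m := by rw [hw]; simp only [if_neg (by omega : ¬ m < 2)]
          rw [hg]; simp only [if_neg hm0, hwm, nsmul_eq_mul]
          push_cast; ring
        rw [Finset.sum_congr rfl hrest, nsmul_eq_mul]
        push_cast; ring
    have h4 : (((Finset.univ.biUnion A).card : ℚ))
        = z * t * k + ∑ s ∈ Finset.Icc 2 z,
            (-1 : ℚ) ^ (s + 1) * (t : ℚ) ^ s * (z.choose s) * μ s := by
      exact_mod_cast h3
    rw [h4, add_div, Finset.sum_div]
    congr 1
    · ring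
    · exact Finset.sum_congr rfl fun s _ => by ring
  · intro q m hq hm
    have hq0 : (q : ℚ) ≠ 0 := by
      have : (0 : ℚ) < q := by exact_mod_cast Nat.lt_of_lt_of_le (by norm_num) hq
      exact ne_of_gt this
    have hqm : (q : ℚ) ^ m = (q : ℚ) ^ (m - 2) * (q : ℚ) ^ 2 := by
      rw [← pow_add, Nat.sub_add_cancel hm]
    rw [hqm]
    have h2 : (q : ℚ) ^ (m - 2) ≠ 0 := pow_ne_zero _ hq0
    field_simp
end
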